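/- For a finite MDP, the Blackwell discount factor γ_bw satisfies γ_bw ≤ γ_Q, where γ_Q is the supremum over all policies π, states s, and action pairs (a, a') of the infimum of γ ∈ [0,1) such that the strict ordering Q^π_τ(s,a) > Q^π_τ(s,a') is invariant for all τ ∈ (γ, 1). Moreover γ_Q exists (i.e., γ_Q < 1) for every finite MDP. -/

import Mathlib

open Matrix Set

/-- A finite MDP with state space `S` and action space `A`. -/
structure FinMDP (S A : Type) [Fintype S] where
  T : S → A → S → ℝ
  R : S → A → ℝ
  T_nonneg : ∀ s a s', 0 ≤ T s a s'
  T_sum_one : ∀ s a, ∑ s', T s a s' = 1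

/-- The discounted value vector of a (deterministic stationary) policy `π`:
`v = (I - γ Pᵖ)⁻¹ rᵖ`. -/
noncomputable def FinMDP.val {S A : Type} [Fintype S] [DecidableEq S]
    (M : FinMDP S A) (π : S → A) (γ : ℝ) : S → ℝ :=
  ((1 : Matrix S S ℝ) - γ • Matrix.of fun s s' => M.T s (π s) s')⁻¹ *ᵥ
    fun s => M.R s (π s)

/-- The action-value (Q-) function of a policy. -/
noncomputable def FinMDP.Q {S A : Type} [Fintype S] [DecidableEq S]
    (M : FinMDP S A) (π : S → A) (γ : ℝ) (s : S) (a : A) : ℝ :=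
  M.R s a + γ * ∑ s', M.T s a s' * M.val π γ s'

/-- The set of discount-optimal policies at discount factor `γ`. -/
def FinMDP.discOpt {S A : Type} [Fintype S] [DecidableEq S]
    (M : FinMDP S A) (γ : ℝ) : Set (S → A) :=
  {π | ∀ (π' : S → A) (s : S), M.val π' γ s ≤ M.val π γ s}

/-- The set of Blackwell-optimal policies. -/
def FinMDP.blackwellOpt {S A : Type} [Fintype S] [DecidableEq S]
    (M : FinMDP S A) : Set (S → A) :=
  {π | ∃ γ' ∈ Ico (0 : ℝ) 1, ∀ γ ∈ Ioo γ' 1, π ∈ M.discOpt γ}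

/-- The Blackwell discount factor `γ_bw`: the infimum of `γ ∈ [0,1)` beyond which
the discount-optimal policies are exactly the Blackwell-optimal policies. -/
noncomputable def FinMDP.gammaBw {S A : Type} [Fintype S] [DecidableEq S]
    (M : FinMDP S A) : ℝ :=
  sInf {γ ∈ Ico (0 : ℝ) 1 | ∀ γ' ∈ Ioo γ 1, M.discOpt γ' = M.blackwellOpt}

/-- The Q-ordering threshold `γ_Q`: the supremum over policies `π`, states `s`, and
action pairs `(a,a')` of the infimum of `γ ∈ [0,1)` such that the strict ordering of
`Q^π_τ(s,a)` and `Q^π_τ(s,a')` is invariant for all `τ ∈ (γ,1)`. -/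
noncomputable def FinMDP.gammaQ {S A : Type} [Fintype S] [DecidableEq S]
    (M : FinMDP S A) : ℝ :=
  sSup {x | ∃ (π : S → A) (s : S) (a a' : A),
    x = sInf {γ ∈ Ico (0 : ℝ) 1 | ∀ τ ∈ Ioo γ 1, ∀ τ' ∈ Ioo γ 1,
      (M.Q π τ s a' < M.Q π τ s a ↔ M.Q π τ' s a' < M.Q π τ' s a)}}

/-!
For a fixed `γ ∈ [0,1)`, a policy is discount-optimal iff it is greedy with respect to its own
Q-function: this is policy improvement, resting on the comparison principle `u = w + γ P u, w ≥ 0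
⟹ u ≥ w` for stochastic `P`. By Cramer's rule every Q-function is a rational function of `γ`
without poles on `[0,1)`, so by isolated zeros and the intermediate value theorem every ordering
`Q^π_γ(s,a') < Q^π_γ(s,a)` eventually stops changing as `γ → 1`. There are finitely many such
orderings, so all of them are frozen on `(γ_Q, 1)` with `γ_Q < 1`. On that interval the greedy
characterisation makes the set of optimal policies constant, and a set of optimal policies that
is constant near `1` is exactly the set of Blackwell-optimal policies.
-/

open Polynomial Filter Topology

def stableThresholds (p : ℝ → Prop) : Set ℝ :=
  {γ ∈ Ico (0 : ℝ) 1 | ∀ τ ∈ Ioo γ 1, ∀ τ' ∈ Ioo γ 1, (p τ ↔ p τ')}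

section StableThresholds

variable {p : ℝ → Prop}

theorem mem_stableThresholds_of_le {γ γ' : ℝ} (hγ : γ ∈ stableThresholds p) (hle : γ ≤ γ')
    (h1 : γ' < 1) : γ' ∈ stableThresholds p :=
  ⟨⟨hγ.1.1.trans hle, h1⟩, fun τ hτ τ' hτ' =>
    hγ.2 τ ⟨hle.trans_lt hτ.1, hτ.2⟩ τ' ⟨hle.trans_lt hτ'.1, hτ'.2⟩⟩

theorem csInf_mem_stableThresholds (h : (stableThresholds p).Nonempty) :
    sInf (stableThresholds p) ∈ stableThresholds p := by
  have hbdd : BddBelow (stableThresholds p) := ⟨0, fun _ hγ => hγ.1.1⟩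
  obtain ⟨γ, hγ⟩ := h
  refine ⟨⟨Real.sInf_nonneg fun _ hγ => hγ.1.1, (csInf_le hbdd hγ).trans_lt hγ.1.2⟩,
    fun τ hτ τ' hτ' => ?_⟩
  obtain ⟨γ', hγ', hlt⟩ := (csInf_lt_iff hbdd ⟨γ, hγ⟩).1 (lt_min hτ.1 hτ'.1)
  exact hγ'.2 τ ⟨hlt.trans_le (min_le_left _ _), hτ.2⟩ τ' ⟨hlt.trans_le (min_le_right _ _), hτ'.2⟩

end StableThresholds

theorem Real.sSup_mem_Ico_of_finite {s : Set ℝ} (hs : s.Finite) (h : s ⊆ Ico 0 1) :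
    sSup s ∈ Ico 0 1 := by
  rcases s.eq_empty_or_nonempty with rfl | hne
  · simp
  · exact h (hne.csSup_mem hs)

theorem IsPreconnected.pos_iff_pos_of_ne_zero {X : Type*} [TopologicalSpace X] {s : Set X}
    (hs : IsPreconnected s) {f : X → ℝ} (hf : ContinuousOn f s) (h0 : ∀ x ∈ s, f x ≠ 0)
    {x y : X} (hx : x ∈ s) (hy : y ∈ s) : 0 < f x ↔ 0 < f y := by
  suffices key : ∀ x ∈ s, ∀ y ∈ s, 0 < f x → 0 < f y from ⟨key x hx y hy, key y hy x hx⟩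
  intro x hx y hy hfx
  by_contra! hfy
  obtain ⟨z, hz, hfz⟩ := hs.intermediate_value hy hx hf ⟨hfy, hfx.le⟩
  exact h0 z hz hfz

theorem Polynomial.stableThresholds_eval_pos_nonempty (p : ℝ[X]) :
    (stableThresholds fun τ => 0 < p.eval τ).Nonempty := by
  obtain ⟨l, hl, hp⟩ : ∃ l < 1, (∀ x ∈ Ioo l 1, p.eval x = 0) ∨ ∀ x ∈ Ioo l 1, p.eval x ≠ 0 := by
    rcases (AnalyticOnNhd.eval_polynomial p 1 trivial).eventually_eq_zero_or_eventually_ne_zero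
      with h | h
    · obtain ⟨l, hl, hsub⟩ := mem_nhdsLT_iff_exists_Ioo_subset.1 (nhdsWithin_le_nhds h)
      exact ⟨l, hl, Or.inl hsub⟩
    · obtain ⟨l, hl, hsub⟩ := mem_nhdsLT_iff_exists_Ioo_subset.1
        (nhdsWithin_mono _ (fun _ hx => ne_of_lt hx) h)
      exact ⟨l, hl, Or.inr hsub⟩
  refine ⟨max l 0, ⟨le_max_right _ _, max_lt hl one_pos⟩, fun τ hτ τ' hτ' => ?_⟩
  have hτl : τ ∈ Ioo l 1 := ⟨(le_max_left _ _).trans_lt hτ.1, hτ.2⟩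
  have hτ'l : τ' ∈ Ioo l 1 := ⟨(le_max_left _ _).trans_lt hτ'.1, hτ'.2⟩
  rcases hp with hp | hp
  · simp [hp τ hτl, hp τ' hτ'l]
  · exact isPreconnected_Ioo.pos_iff_pos_of_ne_zero p.continuous.continuousOn hp hτl hτ'l

def rationalFunctionsOn (s : Set ℝ) : Subalgebra ℝ (ℝ → ℝ) where
  carrier := {f | ∃ p q : ℝ[X], ∀ x ∈ s, q.eval x ≠ 0 ∧ f x = p.eval x / q.eval x}
  mul_mem' := by
    rintro f g ⟨p, q, hf⟩ ⟨p', q', hg⟩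
    refine ⟨p * p', q * q', fun x hx => ?_⟩
    obtain ⟨hq, hfx⟩ := hf x hx
    obtain ⟨hq', hgx⟩ := hg x hx
    exact ⟨by simp [hq, hq'], by simp [hfx, hgx, div_mul_div_comm]⟩
  add_mem' := by
    rintro f g ⟨p, q, hf⟩ ⟨p', q', hg⟩
    refine ⟨p * q' + q * p', q * q', fun x hx => ?_⟩
    obtain ⟨hq, hfx⟩ := hf x hx
    obtain ⟨hq', hgx⟩ := hg x hx
    exact ⟨by simp [hq, hq'], by simp [hfx, hgx, div_add_div _ _ hq hq']⟩
  algebraMap_mem' c := ⟨C c, 1, fun x _ => by simp⟩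

theorem id_mem_rationalFunctionsOn (s : Set ℝ) : id ∈ rationalFunctionsOn s :=
  ⟨X, 1, fun x _ => by simp⟩

theorem stableThresholds_pos_nonempty_of_mem_rationalFunctionsOn {f : ℝ → ℝ}
    (hf : f ∈ rationalFunctionsOn (Ico 0 1)) : (stableThresholds fun τ => 0 < f τ).Nonempty := by
  obtain ⟨p, q, hpq⟩ := hf
  obtain ⟨γ, hγ, hconst⟩ := (p * q).stableThresholds_eval_pos_nonempty
  -- `p / q` and `p * q` have the same sign, also where `q` vanishes
  have hsign : ∀ τ ∈ Ioo γ 1, (0 < f τ ↔ 0 < (p * q).eval τ) := fun τ hτ => by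
    rw [(hpq τ ⟨hγ.1.trans hτ.1.le, hτ.2⟩).2, eval_mul, div_pos_iff, mul_pos_iff]
  exact ⟨γ, hγ, fun τ hτ τ' hτ' =>
    (hsign τ hτ).trans ((hconst τ hτ τ' hτ').trans (hsign τ' hτ').symm)⟩

section Stochastic

variable {n : Type*} [Fintype n] [DecidableEq n] {P : Matrix n n ℝ} {γ : ℝ}

theorem Matrix.det_one_sub_smul_ne_zero (hP : P ∈ rowStochastic ℝ n) (hγ0 : 0 ≤ γ)
    (hγ1 : γ < 1) : (1 - γ • P).det ≠ 0 := by
  refine det_ne_zero_of_sum_row_lt_diag fun k => ?_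
  have hrow := sum_row_of_mem_rowStochastic hP k
  rw [← Finset.add_sum_erase _ _ (Finset.mem_univ k)] at hrow
  have hoff : ∑ j ∈ Finset.univ.erase k, ‖(1 - γ • P) k j‖ =
      γ * ∑ j ∈ Finset.univ.erase k, P k j := by
    rw [Finset.mul_sum]
    refine Finset.sum_congr rfl fun j hj => ?_
    rw [sub_apply, one_apply_ne (Finset.ne_of_mem_erase hj).symm, smul_apply, smul_eq_mul,
      zero_sub, norm_neg, Real.norm_of_nonneg (mul_nonneg hγ0 (nonneg_of_mem_rowStochastic hP))]
  have hPkk : P k k ≤ 1 := le_one_of_mem_rowStochastic hP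
  rw [hoff, sub_apply, one_apply_eq, smul_apply, smul_eq_mul, Real.norm_of_nonneg (by nlinarith)]
  nlinarith

theorem Matrix.le_mulVec_of_mem_rowStochastic (hP : P ∈ rowStochastic ℝ n) {c : ℝ} {u : n → ℝ}
    (hu : ∀ j, c ≤ u j) (i : n) : c ≤ (P *ᵥ u) i :=
  calc c = ∑ j, P i j * c := by rw [← Finset.sum_mul, sum_row_of_mem_rowStochastic hP, one_mul]
    _ ≤ ∑ j, P i j * u j :=
      Finset.sum_le_sum fun j _ => mul_le_mul_of_nonneg_left (hu j) (nonneg_of_mem_rowStochastic hP)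

theorem Matrix.le_of_eq_add_smul_mulVec (hP : P ∈ rowStochastic ℝ n) (hγ0 : 0 ≤ γ) (hγ1 : γ < 1)
    {u w : n → ℝ} (hu : u = w + γ • P *ᵥ u) (hw : 0 ≤ w) : w ≤ u := by
  have hu_apply : ∀ i, u i = w i + γ * (P *ᵥ u) i := fun i => congrFun hu i
  have hu0 : ∀ i, 0 ≤ u i := by
    by_contra! hneg
    obtain ⟨i, hi⟩ := hneg
    obtain ⟨i₀, -, hmin⟩ := Finset.univ.exists_min_image u ⟨i, Finset.mem_univ i⟩
    -- at a minimum of `u`, `u = w + γ P u ≥ γ u`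
    have hPu := le_mulVec_of_mem_rowStochastic hP (fun j => hmin j (Finset.mem_univ j)) i₀
    have hw₀ : 0 ≤ w i₀ := hw i₀
    have hneg₀ : u i₀ < 0 := (hmin i (Finset.mem_univ i)).trans_lt hi
    nlinarith [hu_apply i₀, mul_le_mul_of_nonneg_left hPu hγ0,
      mul_neg_of_pos_of_neg (sub_pos.2 hγ1) hneg₀]
  intro i
  have hPu := mul_nonneg hγ0 (le_mulVec_of_mem_rowStochastic hP hu0 i)
  linarith [hu_apply i]

end Stochastic

section Cramer

variable {n : Type*} [Fintype n] [DecidableEq n]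

theorem Matrix.map_evalRingHom_one_sub_X_smul {R : Type*} [CommRing R] (P : Matrix n n R) (γ : R) :
    (evalRingHom γ).mapMatrix (1 - (X : R[X]) • P.map C) = 1 - γ • P := by
  ext i j
  rcases eq_or_ne i j with rfl | hij <;> simp [*] <;> ring

theorem Matrix.inv_one_sub_smul_mulVec_mem_rationalFunctionsOn (P : Matrix n n ℝ) (r : n → ℝ)
    (i : n) {s : Set ℝ} (hs : ∀ γ ∈ s, (1 - γ • P).det ≠ 0) :
    (fun γ => ((1 - γ • P)⁻¹ *ᵥ r) i) ∈ rationalFunctionsOn s := by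
  -- Cramer's rule over `ℝ[X]`
  refine ⟨∑ j, (1 - (X : ℝ[X]) • P.map C).adjugate i j * C (r j), P.charpolyRev,
    fun γ hγ => ?_⟩
  have hdet : P.charpolyRev.eval γ = (1 - γ • P).det := by
    rw [charpolyRev, ← coe_evalRingHom, RingHom.map_det, map_evalRingHom_one_sub_X_smul]
  have hadj : ∀ j, ((1 - (X : ℝ[X]) • P.map C).adjugate i j).eval γ = (1 - γ • P).adjugate i j :=
    fun j => by
      rw [← map_evalRingHom_one_sub_X_smul P γ, ← RingHom.map_adjugate]
      rfl
  refine ⟨hdet ▸ hs γ hγ, ?_⟩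
  simp only [eval_finsetSum, eval_mul, eval_C, hadj, hdet, inv_def, Ring.inverse_eq_inv',
    smul_mulVec, Pi.smul_apply, smul_eq_mul, div_eq_inv_mul]
  rfl

end Cramer

namespace FinMDP

variable {S A : Type} [Fintype S] (M : FinMDP S A) {γ : ℝ}

def transMatrix (π : S → A) : Matrix S S ℝ :=
  Matrix.of fun s s' => M.T s (π s) s'

theorem transMatrix_mulVec_apply (π : S → A) (v : S → ℝ) (s : S) :
    (M.transMatrix π *ᵥ v) s = ∑ s', M.T s (π s) s' * v s' :=
  rfl

variable [DecidableEq S]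

theorem transMatrix_mem_rowStochastic (π : S → A) : M.transMatrix π ∈ rowStochastic ℝ S :=
  mem_rowStochastic_iff_sum.2 ⟨fun _ _ => M.T_nonneg _ _ _, fun _ => M.T_sum_one _ _⟩

theorem val_eq_inv_mulVec (π : S → A) :
    M.val π γ = (1 - γ • M.transMatrix π)⁻¹ *ᵥ fun s => M.R s (π s) :=
  rfl

theorem val_eq_add_smul_mulVec (π : S → A) (hγ0 : 0 ≤ γ) (hγ1 : γ < 1) :
    M.val π γ = (fun s => M.R s (π s)) + γ • M.transMatrix π *ᵥ M.val π γ := by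
  have hunit : IsUnit (1 - γ • M.transMatrix π).det :=
    (det_one_sub_smul_ne_zero (M.transMatrix_mem_rowStochastic π) hγ0 hγ1).isUnit
  have hsolve : (1 - γ • M.transMatrix π) *ᵥ M.val π γ = fun s => M.R s (π s) := by
    rw [val_eq_inv_mulVec, mulVec_mulVec, mul_nonsing_inv _ hunit, one_mulVec]
  rw [sub_mulVec, one_mulVec, smul_mulVec] at hsolve
  rw [← hsolve, sub_add_cancel]

theorem val_eq_Q (π : S → A) (hγ0 : 0 ≤ γ) (hγ1 : γ < 1) (s : S) :
    M.val π γ s = M.Q π γ s (π s) :=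
  congrFun (M.val_eq_add_smul_mulVec π hγ0 hγ1) s

theorem val_sub_val_eq (π π' : S → A) (hγ0 : 0 ≤ γ) (hγ1 : γ < 1) :
    M.val π' γ - M.val π γ = (fun s => M.Q π γ s (π' s) - M.val π γ s) +
      γ • M.transMatrix π' *ᵥ (M.val π' γ - M.val π γ) := by
  ext s
  have h := congrFun (M.val_eq_add_smul_mulVec π' hγ0 hγ1) s
  simp only [Pi.add_apply, Pi.sub_apply, Pi.smul_apply, smul_eq_mul, mulVec_sub, mul_sub, Q,
    transMatrix_mulVec_apply] at h ⊢
  linarith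

theorem val_le_of_Q_le {π π' : S → A} (hγ0 : 0 ≤ γ) (hγ1 : γ < 1)
    (h : ∀ s, M.Q π γ s (π' s) ≤ M.val π γ s) : M.val π' γ ≤ M.val π γ := by
  have hcmp := le_of_eq_add_smul_mulVec (M.transMatrix_mem_rowStochastic π') hγ0 hγ1
    (u := M.val π γ - M.val π' γ) (w := fun s => M.val π γ s - M.Q π γ s (π' s))
    (by
      ext s
      have hs := congrFun (M.val_sub_val_eq π π' hγ0 hγ1) s
      simp only [Pi.add_apply, Pi.sub_apply, Pi.smul_apply, smul_eq_mul, mulVec_sub] at hs ⊢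
      linarith)
    (fun s => sub_nonneg.2 (h s))
  intro s
  have hs := hcmp s
  simp only [Pi.sub_apply] at hs
  linarith [h s]

theorem Q_sub_val_le_val_sub_val {π π' : S → A} (hγ0 : 0 ≤ γ) (hγ1 : γ < 1)
    (h : ∀ s, M.val π γ s ≤ M.Q π γ s (π' s)) (s : S) :
    M.Q π γ s (π' s) - M.val π γ s ≤ M.val π' γ s - M.val π γ s :=
  le_of_eq_add_smul_mulVec (M.transMatrix_mem_rowStochastic π') hγ0 hγ1
    (M.val_sub_val_eq π π' hγ0 hγ1) (fun s => sub_nonneg.2 (h s)) s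

theorem mem_discOpt_iff (π : S → A) (hγ0 : 0 ≤ γ) (hγ1 : γ < 1) :
    π ∈ M.discOpt γ ↔ ∀ s a, M.Q π γ s a ≤ M.Q π γ s (π s) := by
  simp only [← M.val_eq_Q π hγ0 hγ1]
  refine ⟨fun hπ s a => ?_, fun h π' s => M.val_le_of_Q_le hγ0 hγ1 (fun s => h s (π' s)) s⟩
  by_contra! hlt
  -- switching to `a` at `s` alone would strictly raise the value at `s`
  have himprove := M.Q_sub_val_le_val_sub_val (π' := Function.update π s a) hγ0 hγ1 (fun s' => by
    rcases eq_or_ne s' s with rfl | hs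
    · simpa using hlt.le
    · simpa [Function.update_of_ne hs] using (M.val_eq_Q π hγ0 hγ1 s').le) s
  rw [Function.update_self] at himprove
  linarith [hπ (Function.update π s a) s]

theorem Q_mem_rationalFunctionsOn (π : S → A) (s : S) (a : A) :
    (fun γ => M.Q π γ s a) ∈ rationalFunctionsOn (Ico 0 1) := by
  have hval : ∀ s', (fun γ => M.val π γ s') ∈ rationalFunctionsOn (Ico 0 1) := fun s' =>
    inv_one_sub_smul_mulVec_mem_rationalFunctionsOn _ _ s' fun _ hγ =>
      det_one_sub_smul_ne_zero (M.transMatrix_mem_rowStochastic π) hγ.1 hγ.2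
  have hQ : (fun γ => M.Q π γ s a) = algebraMap ℝ (ℝ → ℝ) (M.R s a) +
      id * ∑ s', algebraMap ℝ (ℝ → ℝ) (M.T s a s') * fun γ => M.val π γ s' := by
    ext γ
    simp [Q, Finset.sum_apply]
  rw [hQ]
  exact add_mem (algebraMap_mem _ _) (mul_mem (id_mem_rationalFunctionsOn _)
    (sum_mem fun s' _ => mul_mem (algebraMap_mem _ _) (hval s')))

theorem stableThresholds_Q_lt_nonempty (π : S → A) (s : S) (a a' : A) :
    (stableThresholds fun τ => M.Q π τ s a' < M.Q π τ s a).Nonempty := by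
  simpa only [Pi.sub_apply, sub_pos] using stableThresholds_pos_nonempty_of_mem_rationalFunctionsOn
    (sub_mem (M.Q_mem_rationalFunctionsOn π s a) (M.Q_mem_rationalFunctionsOn π s a'))

theorem discOpt_eq_discOpt_of_Q_lt_iff {γ₀ γ₁ γ₂ : ℝ} (hγ₀ : 0 ≤ γ₀)
    (h : ∀ π s a a', ∀ τ ∈ Ioo γ₀ 1, ∀ τ' ∈ Ioo γ₀ 1,
      (M.Q π τ s a' < M.Q π τ s a ↔ M.Q π τ' s a' < M.Q π τ' s a))
    (hγ₁ : γ₁ ∈ Ioo γ₀ 1) (hγ₂ : γ₂ ∈ Ioo γ₀ 1) : M.discOpt γ₁ = M.discOpt γ₂ := by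
  ext π
  rw [M.mem_discOpt_iff π (hγ₀.trans hγ₁.1.le) hγ₁.2,
    M.mem_discOpt_iff π (hγ₀.trans hγ₂.1.le) hγ₂.2]
  simp only [← not_lt, h π _ _ _ γ₁ hγ₁ γ₂ hγ₂]

theorem discOpt_eq_blackwellOpt {γ₀ : ℝ} (hγ₀ : 0 ≤ γ₀)
    (h : ∀ γ₁ ∈ Ioo γ₀ 1, ∀ γ₂ ∈ Ioo γ₀ 1, M.discOpt γ₁ = M.discOpt γ₂) (hγ : γ ∈ Ioo γ₀ 1) :
    M.discOpt γ = M.blackwellOpt := by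
  ext π
  refine ⟨fun hπ => ⟨γ, ⟨hγ₀.trans hγ.1.le, hγ.2⟩, fun γ' hγ' =>
    h γ hγ γ' ⟨hγ.1.trans hγ'.1, hγ'.2⟩ ▸ hπ⟩, ?_⟩
  rintro ⟨γ', hγ', hπ⟩
  obtain ⟨γ'', hlt, hlt1⟩ := exists_between (max_lt hγ.2 hγ'.2)
  rw [h γ hγ γ'' ⟨hγ.1.trans ((le_max_left _ _).trans_lt hlt), hlt1⟩]
  exact hπ γ'' ⟨(le_max_right _ _).trans_lt hlt, hlt1⟩

theorem gammaBw_le {γ₀ : ℝ} (hγ₀ : γ₀ ∈ Ico 0 1)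
    (h : ∀ γ ∈ Ioo γ₀ 1, M.discOpt γ = M.blackwellOpt) : M.gammaBw ≤ γ₀ :=
  csInf_le ⟨0, fun _ hγ => hγ.1.1⟩ ⟨hγ₀, h⟩

noncomputable def qThreshold (π : S → A) (s : S) (a a' : A) : ℝ :=
  sInf (stableThresholds fun τ => M.Q π τ s a' < M.Q π τ s a)

theorem qThreshold_mem_stableThresholds (π : S → A) (s : S) (a a' : A) :
    M.qThreshold π s a a' ∈ stableThresholds fun τ => M.Q π τ s a' < M.Q π τ s a :=
  csInf_mem_stableThresholds (M.stableThresholds_Q_lt_nonempty π s a a')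

theorem finite_qThresholds [Fintype A] :
    {x | ∃ π s a a', x = M.qThreshold π s a a'}.Finite :=
  (finite_range fun t : (S → A) × S × A × A => M.qThreshold t.1 t.2.1 t.2.2.1 t.2.2.2).subset
    (by rintro _ ⟨π, s, a, a', rfl⟩; exact ⟨(π, s, a, a'), rfl⟩)

theorem gammaQ_mem_Ico [Fintype A] : M.gammaQ ∈ Ico 0 1 :=
  Real.sSup_mem_Ico_of_finite M.finite_qThresholds
    (by rintro _ ⟨π, s, a, a', rfl⟩; exact (M.qThreshold_mem_stableThresholds π s a a').1)

theorem gammaQ_mem_stableThresholds [Fintype A] (π : S → A) (s : S) (a a' : A) :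
    M.gammaQ ∈ stableThresholds fun τ => M.Q π τ s a' < M.Q π τ s a :=
  mem_stableThresholds_of_le (M.qThreshold_mem_stableThresholds π s a a')
    (le_csSup M.finite_qThresholds.bddAbove ⟨π, s, a, a', rfl⟩) M.gammaQ_mem_Ico.2

end FinMDP

theorem gammaBw_le_gammaQ_general
    (S A : Type) [Fintype S] [DecidableEq S] [Fintype A]
    (M : FinMDP S A) :
    M.gammaBw ≤ M.gammaQ ∧ M.gammaQ < 1 := by
  have hQ := M.gammaQ_mem_Ico
  have hdisc : ∀ γ₁ ∈ Ioo M.gammaQ 1, ∀ γ₂ ∈ Ioo M.gammaQ 1, M.discOpt γ₁ = M.discOpt γ₂ :=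
    fun γ₁ hγ₁ γ₂ hγ₂ => M.discOpt_eq_discOpt_of_Q_lt_iff hQ.1
      (fun π s a a' => (M.gammaQ_mem_stableThresholds π s a a').2) hγ₁ hγ₂
  exact ⟨M.gammaBw_le hQ fun γ hγ => M.discOpt_eq_blackwellOpt hQ.1 hdisc hγ, hQ.2⟩

/-- **`γ_bw ≤ γ_Q`, and `γ_Q` exists (is `< 1`) for every finite MDP.** -/
theorem gammaBw_le_gammaQ
    (S A : Type) [Fintype S] [DecidableEq S] [Nonempty S] [Fintype A] [Nonempty A]
    (M : FinMDP S A) :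
    M.gammaBw ≤ M.gammaQ ∧ M.gammaQ < 1 :=
  gammaBw_le_gammaQ_general S A M
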